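/- arXiv:2303.11584 — 4 statements merged into one kernel-verified Lean document; each statement's English description precedes it below -/
import Mathlib

section
/- Let α, β, C, T be real numbers with α > β > 2, C > 0 and T > 1, and let χ : [1, T] → (0,∞) be continuously differentiable and nondecreasing with χ(1) ≥ 1. Assume that (1+t)^{−2/β} ≤ C·χ'(t)·χ(t)^{−α/β} for every t ∈ [1, T]. Then (1+T)^{(β−2)/β} ≤ 2^{(β−2)/β} + C·(β−2)/(α−β); in particular T ≤ (2^{(β−2)/β} + C(β−2)/(α−β))^{β/(β−2)} − 1. -/
open Real Set

/-- ODE-comparison lemma: if `χ : [1,T] → (0,∞)` is `C¹`, nondecreasing, with `χ 1 ≥ 1`,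
and `(1+t)^(-2/β) ≤ C χ'(t) χ(t)^(-α/β)` on `[1,T]` with `α > β > 2`, `C > 0`, `T > 1`,
then `(1+T)^((β-2)/β) ≤ 2^((β-2)/β) + C(β-2)/(α-β)`, and in particular
`T ≤ (2^((β-2)/β) + C(β-2)/(α-β))^(β/(β-2)) - 1`. -/
theorem ode_comparison_bound (α β C T : ℝ) (hαβ : β < α) (hβ : 2 < β)
    (hC : 0 < C) (hT : 1 < T) (χ χ' : ℝ → ℝ)
    (hderiv : ∀ t ∈ Icc (1 : ℝ) T, HasDerivWithinAt χ (χ' t) (Icc (1 : ℝ) T) t)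
    (hderiv_cont : ContinuousOn χ' (Icc (1 : ℝ) T))
    (hmono : MonotoneOn χ (Icc (1 : ℝ) T))
    (hpos : ∀ t ∈ Icc (1 : ℝ) T, 0 < χ t)
    (hχ1 : 1 ≤ χ 1)
    (hineq : ∀ t ∈ Icc (1 : ℝ) T,
      (1 + t) ^ (-2 / β) ≤ C * χ' t * (χ t) ^ (-α / β)) :
    (1 + T) ^ ((β - 2) / β) ≤ (2 : ℝ) ^ ((β - 2) / β) + C * (β - 2) / (α - β) ∧
    T ≤ ((2 : ℝ) ^ ((β - 2) / β) + C * (β - 2) / (α - β)) ^ (β / (β - 2)) - 1 := by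
  have hβ0 : (0:ℝ) < β := by linarith
  have hβ2 : (0:ℝ) < β - 2 := by linarith
  have hαβ' : (0:ℝ) < α - β := by linarith
  set p : ℝ := (β - 2) / β with hp
  set q : ℝ := (β - α) / β with hq
  have hp_pos : 0 < p := div_pos hβ2 hβ0
  have hq_neg : q < 0 := div_neg_of_neg_of_pos (by linarith) hβ0
  set a : ℝ := β / (β - 2) with ha
  set b : ℝ := C * β / (α - β) with hb
  have ha_pos : 0 < a := div_pos hβ0 hβ2
  have hb_pos : 0 < b := div_pos (mul_pos hC hβ0) hαβ'
  set H : ℝ → ℝ := fun t => a * (1 + t) ^ p + b * χ t ^ q with hH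
  -- continuity of χ
  have hχcont : ContinuousOn χ (Icc (1:ℝ) T) := fun t ht =>
    (hderiv t ht).continuousWithinAt
  have hHcont : ContinuousOn H (Icc (1:ℝ) T) := by
    apply ContinuousOn.add
    · exact continuousOn_const.mul <| (continuousOn_const.add continuousOn_id).rpow_const
        (fun t ht => Or.inl (by simp only [mem_Icc, id, Pi.add_apply] at ht ⊢; nlinarith [ht.1]))
    · exact continuousOn_const.mul (hχcont.rpow_const fun t ht => Or.inl (hpos t ht).ne')
  -- derivative on interior
  have hint : interior (Icc (1:ℝ) T) = Ioo 1 T := interior_Icc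
  have hkey : AntitoneOn H (Icc (1:ℝ) T) := by
    apply antitoneOn_of_hasDerivWithinAt_nonpos (convex_Icc _ _) hHcont
      (f' := fun t => (1 + t) ^ (-2/β) - C * χ' t * χ t ^ (-α/β))
    · intro t ht
      rw [hint] at ht ⊢
      have htmem : t ∈ Icc (1:ℝ) T := Ioo_subset_Icc_self ht
      have h1t : (0:ℝ) < 1 + t := by have := ht.1; linarith
      have hχt : 0 < χ t := hpos t htmem
      have hd1 : HasDerivAt (fun s => a * (1 + s) ^ p)
          (a * (1 * p * (1 + t) ^ (p - 1))) t := by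
        exact (((hasDerivAt_id t).const_add 1).rpow_const (Or.inl h1t.ne')).const_mul a
      have hdχ : HasDerivAt χ (χ' t) t :=
        (hderiv t htmem).hasDerivAt (Icc_mem_nhds ht.1 ht.2)
      have hd2 : HasDerivAt (fun s => b * χ s ^ q)
          (b * (χ' t * q * χ t ^ (q - 1))) t :=
        (hdχ.rpow_const (Or.inl hχt.ne')).const_mul b
      have hd : HasDerivAt H (a * (1 * p * (1 + t) ^ (p - 1)) +
          b * (χ' t * q * χ t ^ (q - 1))) t := hd1.add hd2
      have he : a * (1 * p * (1 + t) ^ (p - 1)) + b * (χ' t * q * χ t ^ (q - 1))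
          = (1 + t) ^ (-2/β) - C * χ' t * χ t ^ (-α/β) := by
        have hap : a * p = 1 := by
          rw [ha, hp]; field_simp
        have hbq : b * q = -C := by
          rw [hb, hq]; field_simp
          ring
        have hp1 : p - 1 = -2/β := by rw [hp]; field_simp; ring
        have hq1 : q - 1 = -α/β := by rw [hq]; field_simp; ring
        rw [hp1, hq1]
        linear_combination (1 + t) ^ (-2/β) * hap + (χ' t * χ t ^ (-α/β)) * hbq
      rw [he] at hd
      exact hd.hasDerivWithinAt
    · intro t ht
      rw [hint] at ht
      have := hineq t (Ioo_subset_Icc_self ht)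
      linarith
  have hHT : H T ≤ H 1 :=
    hkey (left_mem_Icc.2 hT.le) (right_mem_Icc.2 hT.le) hT.le
  -- extract: a*(1+T)^p ≤ a*2^p + b
  have hχ1q : χ 1 ^ q ≤ 1 := by
    apply Real.rpow_le_one_of_one_le_of_nonpos hχ1 hq_neg.le
  have hχTq : 0 ≤ χ T ^ q :=
    (Real.rpow_pos_of_pos (hpos T (right_mem_Icc.2 hT.le)) q).le
  have hmain : a * (1 + T) ^ p ≤ a * 2 ^ p + b := by
    have : (1:ℝ) + 1 = 2 := by norm_num
    simp only [hH, this] at hHT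
    nlinarith
  have hba : b / a = C * (β - 2) / (α - β) := by
    rw [hb, ha]; field_simp
  have h1 : (1 + T) ^ p ≤ 2 ^ p + C * (β - 2) / (α - β) := by
    rw [← hba]
    rw [← mul_le_mul_iff_right₀ ha_pos, mul_add, mul_div_cancel₀ _ ha_pos.ne']
    exact hmain
  refine ⟨h1, ?_⟩
  have hR : (0:ℝ) < 2 ^ p + C * (β - 2) / (α - β) := by
    have : (0:ℝ) < (2:ℝ) ^ p := Real.rpow_pos_of_pos (by norm_num) p
    have : (0:ℝ) < C * (β - 2) / (α - β) := by positivity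
    linarith [Real.rpow_pos_of_pos (show (0:ℝ) < 2 by norm_num) p]
  have h1T : (0:ℝ) < 1 + T := by linarith
  have hfin : 1 + T ≤ (2 ^ p + C * (β - 2) / (α - β)) ^ (β / (β - 2)) := by
    have hinv : β / (β - 2) = p⁻¹ := by rw [hp]; field_simp
    calc 1 + T = ((1 + T) ^ p) ^ p⁻¹ := by
          rw [← Real.rpow_mul h1T.le, mul_inv_cancel₀ hp_pos.ne', Real.rpow_one]
      _ ≤ (2 ^ p + C * (β - 2) / (α - β)) ^ p⁻¹ :=
          Real.rpow_le_rpow (Real.rpow_nonneg h1T.le p) h1 (inv_nonneg.2 hp_pos.le)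
      _ = (2 ^ p + C * (β - 2) / (α - β)) ^ (β / (β - 2)) := by rw [hinv]
  linarith
end

section
/- Let X be a compact metric space, let (μ_j)_{j∈ℕ} and μ be finite Borel measures on X with μ_j → μ weakly (that is, ∫_X g dμ_j → ∫_X g dμ for every continuous g : X → ℝ). Let ν be a [0,∞]-valued function defined on the Borel subsets of X and assume the uniform absolute continuity condition: for every ε > 0 there exists δ > 0 such that every Borel set E with ν(E) < δ satisfies μ(E) < ε and μ_j(E) < ε for all j. Let u_j, u : X → ℝ be Borel measurable functions, all bounded in absolute value by a constant A, such that: (a) for every ε > 0 there exists a continuous function v : X → ℝ with ν({x : u(x) ≠ v(x)}) < ε; and (b) for every δ > 0, ν({x : |u_j(x) − u(x)| > δ}) → 0 as j → ∞. Then u_j μ_j → u μ in the weak sense of Radon measures, i.e. ∫_X g·u_j dμ_j → ∫_X g·u dμ for every continuous g : X → ℝ. -/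
open MeasureTheory Filter
open scoped ENNReal

set_option maxHeartbeats 1000000

private lemma aux_integrable_of_bdd {X : Type*} [MeasurableSpace X] (μ : Measure X)
    [IsFiniteMeasure μ] {f : X → ℝ} (hf : Measurable f) {C : ℝ} (h : ∀ x, |f x| ≤ C) :
    Integrable f μ :=
  ⟨hf.aestronglyMeasurable, HasFiniteIntegral.of_bounded (C := C)
    (Filter.Eventually.of_forall fun x => by simpa [Real.norm_eq_abs] using h x)⟩

private lemma aux_abs_integral_le {X : Type*} [MeasurableSpace X] (μ : Measure X)
    [IsFiniteMeasure μ] (f : X → ℝ) (hf : Measurable f) (E : Set X) (hE : MeasurableSet E)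
    (C1 C2 : ℝ) (hC1 : 0 ≤ C1)
    (hbd : ∀ x, |f x| ≤ C2) (hout : ∀ x ∉ E, |f x| ≤ C1) :
    |∫ x, f x ∂μ| ≤ C1 * (μ Set.univ).toReal + C2 * (μ E).toReal := by
  have hint : Integrable f μ := aux_integrable_of_bdd μ hf hbd
  have hsplit : ∫ x in E, f x ∂μ + ∫ x in Eᶜ, f x ∂μ = ∫ x, f x ∂μ :=
    integral_add_compl hE hint
  have h1 : ‖∫ x in E, f x ∂μ‖ ≤ C2 * ((μ.restrict E) Set.univ).toReal :=
    norm_integral_le_of_norm_le_const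
      (Filter.Eventually.of_forall fun x => by simpa [Real.norm_eq_abs] using hbd x)
  rw [Measure.restrict_apply_univ] at h1
  have h2 : ‖∫ x in Eᶜ, f x ∂μ‖ ≤ C1 * ((μ.restrict Eᶜ) Set.univ).toReal := by
    refine norm_integral_le_of_norm_le_const ?_
    rw [ae_restrict_iff' hE.compl]
    exact Filter.Eventually.of_forall fun x hx => by
      simpa [Real.norm_eq_abs] using hout x hx
  rw [Measure.restrict_apply_univ] at h2
  have h3 : (μ Eᶜ).toReal ≤ (μ Set.univ).toReal :=
    ENNReal.toReal_mono (measure_ne_top μ _) (measure_mono (Set.subset_univ _))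
  rw [Real.norm_eq_abs] at h1 h2
  calc |∫ x, f x ∂μ| = |∫ x in E, f x ∂μ + ∫ x in Eᶜ, f x ∂μ| := by rw [hsplit]
    _ ≤ |∫ x in E, f x ∂μ| + |∫ x in Eᶜ, f x ∂μ| := abs_add_le _ _
    _ ≤ C2 * (μ E).toReal + C1 * (μ Eᶜ).toReal := add_le_add h1 h2
    _ ≤ C1 * (μ Set.univ).toReal + C2 * (μ E).toReal := by nlinarith [mul_le_mul_of_nonneg_left h3 hC1]

/-- The basic convergence lemma: if `μ_j → μ` weakly, all measures are uniformly absolutely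
continuous with respect to a set function `ν`, `u_j, u` are uniformly bounded Borel functions,
`u` is `ν`-quasi-continuous and `u_j → u` in `ν`, then `u_j μ_j → u μ` weakly. -/
theorem weak_convergence_of_convergence_in_capacity {X : Type*} [MetricSpace X] [CompactSpace X]
    [MeasurableSpace X] [BorelSpace X]
    (μs : ℕ → Measure X) (μ : Measure X)
    (hfinj : ∀ j, IsFiniteMeasure (μs j)) (hfin : IsFiniteMeasure μ)
    (hweak : ∀ g : X → ℝ, Continuous g →
      Tendsto (fun j => ∫ x, g x ∂(μs j)) atTop (nhds (∫ x, g x ∂μ)))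
    (ν : Set X → ℝ≥0∞)
    (huac : ∀ ε : ℝ≥0∞, 0 < ε → ∃ δ : ℝ≥0∞, 0 < δ ∧ ∀ E : Set X, MeasurableSet E →
      ν E < δ → μ E < ε ∧ ∀ j, μs j E < ε)
    (u : X → ℝ) (us : ℕ → X → ℝ) (A : ℝ)
    (hu_meas : Measurable u) (hus_meas : ∀ j, Measurable (us j))
    (hu_bdd : ∀ x, |u x| ≤ A) (hus_bdd : ∀ j x, |us j x| ≤ A)
    (hqc : ∀ ε : ℝ≥0∞, 0 < ε → ∃ v : X → ℝ, Continuous v ∧ ν {x | u x ≠ v x} < ε)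
    (hconv : ∀ δ : ℝ, 0 < δ →
      Tendsto (fun j => ν {x | δ < |us j x - u x|}) atTop (nhds 0)) :
    ∀ g : X → ℝ, Continuous g →
      Tendsto (fun j => ∫ x, g x * us j x ∂(μs j)) atTop
        (nhds (∫ x, g x * u x ∂μ)) := by
  intro g hg
  -- a bound for g
  obtain ⟨Cg0, hCg0⟩ := isCompact_univ.exists_bound_of_continuousOn hg.continuousOn
  set Cg : ℝ := max Cg0 0 with hCgdef
  have hCg0' : 0 ≤ Cg := le_max_right _ _
  have hCg : ∀ x, |g x| ≤ Cg := fun x => le_max_of_le_left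
    (by simpa [Real.norm_eq_abs] using hCg0 x (Set.mem_univ x))
  -- bounds for u, us
  set A' : ℝ := max A 0 with hA'def
  have hA'0 : 0 ≤ A' := le_max_right _ _
  have hu_bdd' : ∀ x, |u x| ≤ A' := fun x => (hu_bdd x).trans (le_max_left _ _)
  have hus_bdd' : ∀ j x, |us j x| ≤ A' := fun j x => (hus_bdd j x).trans (le_max_left _ _)
  -- mass bound
  -- mass bound
  set M : ℝ := (μ Set.univ).toReal + 1 with hMdef
  have hM1 : (1 : ℝ) ≤ M := by
    have := ENNReal.toReal_nonneg (a := μ Set.univ); linarith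
  -- the big constant
  set K : ℝ := (Cg + 1) * (M + 2 * A' + 1) with hKdef
  have hK1 : (1 : ℝ) ≤ K := by nlinarith
  have hK0 : (0 : ℝ) < K := lt_of_lt_of_le one_pos hK1
  have hCgM : Cg * M ≤ K := by nlinarith
  have hCgA : Cg * (2 * A') ≤ K := by nlinarith
  rw [Metric.tendsto_atTop]
  intro ε hε
  set r : ℝ := ε / (5 * K) with hrdef
  have hr : 0 < r := by positivity
  have hKr : K * r = ε / 5 := by rw [hrdef]; field_simp
  -- uniform absolute continuity at level ofReal r
  obtain ⟨δ, hδ0, hδ⟩ := huac (ENNReal.ofReal r) (ENNReal.ofReal_pos.2 hr)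
  -- quasicontinuity
  obtain ⟨v, hv_cont, hνE⟩ := hqc δ hδ0
  set E : Set X := {x | u x ≠ v x} with hEdef
  have hE_meas : MeasurableSet E := (measurableSet_eq_fun hu_meas hv_cont.measurable).compl
  obtain ⟨hμE, hμjE⟩ := hδ E hE_meas hνE
  -- truncation of v
  set v' : X → ℝ := fun x => max (-A') (min (v x) A') with hv'def
  have hv'_cont : Continuous v' := continuous_const.max (hv_cont.min continuous_const)
  have hv'_bdd : ∀ x, |v' x| ≤ A' := by
    intro x
    rw [abs_le]
    constructor
    · exact le_max_left _ _
    · exact max_le (by linarith) (min_le_right _ _)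
  have hv'_eq : ∀ x ∉ E, v' x = u x := by
    intro x hx
    have hx' : u x = v x := not_not.1 hx
    have h1 := abs_le.1 (hu_bdd' x)
    simp only [hv'def, ← hx']
    rw [min_eq_left h1.2, max_eq_right h1.1]
  -- measurability of F j
  set F : ℕ → Set X := fun j => {x | r < |us j x - u x|} with hFdef
  have hF_meas : ∀ j, MeasurableSet (F j) :=
    fun j => measurableSet_lt measurable_const ((hus_meas j).sub hu_meas).abs
  -- eventual facts
  have hEv1 : ∀ᶠ j in atTop, ν (F j) < δ := (hconv r hr).eventually_lt_const hδ0
  have hmass : Tendsto (fun j => ((μs j) Set.univ).toReal) atTop (nhds ((μ Set.univ).toReal)) := by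
    have h1 := hweak (fun _ => (1 : ℝ)) continuous_const
    simpa [integral_const, Measure.real] using h1
  have hEv2 : ∀ᶠ j in atTop, ((μs j) Set.univ).toReal < M := by
    refine hmass.eventually_lt_const ?_
    simp only [hMdef]; linarith
  have hEv3 : ∀ᶠ j in atTop,
      dist (∫ x, g x * v' x ∂(μs j)) (∫ x, g x * v' x ∂μ) < ε / 5 := by
    have h3 := hweak (fun x => g x * v' x) (hg.mul hv'_cont)
    have := h3 (Metric.ball_mem_nhds _ (by positivity : (0:ℝ) < ε / 5))
    simpa [Metric.mem_ball] using this
  obtain ⟨N, hN⟩ := eventually_atTop.1 ((hEv1.and hEv2).and hEv3)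
  refine ⟨N, fun j hj => ?_⟩
  obtain ⟨⟨hF1, hM2⟩, h3⟩ := hN j hj
  haveI := hfinj j
  -- measure bounds in ℝ
  have toReal_le : ∀ (m : Measure X) (s : Set X), m s < ENNReal.ofReal r → (m s).toReal ≤ r := by
    intro m s hs
    have := ENNReal.toReal_mono ENNReal.ofReal_ne_top hs.le
    rwa [ENNReal.toReal_ofReal hr.le] at this
  have hμE' : (μ E).toReal ≤ r := toReal_le μ E hμE
  have hμjE' : ((μs j) E).toReal ≤ r := toReal_le (μs j) E (hμjE j)
  have hμjF : ((μs j) (F j)).toReal ≤ r := toReal_le (μs j) (F j) ((hδ (F j) (hF_meas j) hF1).2 j)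
  -- integrability
  have hint_gus : Integrable (fun x => g x * us j x) (μs j) :=
    aux_integrable_of_bdd _ (hg.measurable.mul (hus_meas j))
      (fun x => by rw [abs_mul]; exact mul_le_mul (hCg x) (hus_bdd' j x) (abs_nonneg _) hCg0')
  have hint_gu_j : Integrable (fun x => g x * u x) (μs j) :=
    aux_integrable_of_bdd _ (hg.measurable.mul hu_meas)
      (fun x => by rw [abs_mul]; exact mul_le_mul (hCg x) (hu_bdd' x) (abs_nonneg _) hCg0')
  have hint_gu : Integrable (fun x => g x * u x) μ :=
    aux_integrable_of_bdd _ (hg.measurable.mul hu_meas)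
      (fun x => by rw [abs_mul]; exact mul_le_mul (hCg x) (hu_bdd' x) (abs_nonneg _) hCg0')
  have hint_gv_j : Integrable (fun x => g x * v' x) (μs j) :=
    aux_integrable_of_bdd _ (hg.measurable.mul hv'_cont.measurable)
      (fun x => by rw [abs_mul]; exact mul_le_mul (hCg x) (hv'_bdd x) (abs_nonneg _) hCg0')
  have hint_gv : Integrable (fun x => g x * v' x) μ :=
    aux_integrable_of_bdd _ (hg.measurable.mul hv'_cont.measurable)
      (fun x => by rw [abs_mul]; exact mul_le_mul (hCg x) (hv'_bdd x) (abs_nonneg _) hCg0')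
  -- decomposition
  set T1 : ℝ := ∫ x, g x * (us j x - u x) ∂(μs j) with hT1def
  set T2 : ℝ := ∫ x, g x * (u x - v' x) ∂(μs j) with hT2def
  set T3 : ℝ := ∫ x, g x * v' x ∂(μs j) - ∫ x, g x * v' x ∂μ with hT3def
  set T4 : ℝ := ∫ x, g x * (v' x - u x) ∂μ with hT4def
  have key : ∫ x, g x * us j x ∂(μs j) - ∫ x, g x * u x ∂μ = T1 + T2 + T3 + T4 := by
    have e1 : T1 = ∫ x, g x * us j x ∂(μs j) - ∫ x, g x * u x ∂(μs j) := by
      rw [hT1def, ← integral_sub hint_gus hint_gu_j]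
      congr 1; funext x; ring
    have e2 : T2 = ∫ x, g x * u x ∂(μs j) - ∫ x, g x * v' x ∂(μs j) := by
      rw [hT2def, ← integral_sub hint_gu_j hint_gv_j]
      congr 1; funext x; ring
    have e4 : T4 = ∫ x, g x * v' x ∂μ - ∫ x, g x * u x ∂μ := by
      rw [hT4def, ← integral_sub hint_gv hint_gu]
      congr 1; funext x; ring
    rw [e1, e2, e4, hT3def]; ring
  -- bound T1
  have hb1 : |T1| ≤ Cg * r * ((μs j) Set.univ).toReal + Cg * (2 * A') * ((μs j) (F j)).toReal := by
    refine aux_abs_integral_le (μs j) _ ((hg.measurable).mul ((hus_meas j).sub hu_meas)) (F j)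
      (hF_meas j) (Cg * r) (Cg * (2 * A')) (by positivity) ?_ ?_
    · intro x
      rw [Pi.mul_apply, Pi.sub_apply, abs_mul]
      have : |us j x - u x| ≤ 2 * A' := by
        have := hus_bdd' j x; have := hu_bdd' x
        have habs := abs_sub (us j x) (u x)
        calc |us j x - u x| ≤ |us j x| + |u x| := abs_sub _ _
          _ ≤ 2 * A' := by linarith
      exact mul_le_mul (hCg x) this (abs_nonneg _) hCg0'
    · intro x hx
      rw [Pi.mul_apply, Pi.sub_apply, abs_mul]
      have : |us j x - u x| ≤ r := not_lt.1 hx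
      exact mul_le_mul (hCg x) this (abs_nonneg _) hCg0'
  -- bound T2
  have hb2 : |T2| ≤ 0 * ((μs j) Set.univ).toReal + Cg * (2 * A') * ((μs j) E).toReal := by
    refine aux_abs_integral_le (μs j) _ ((hg.measurable).mul (hu_meas.sub hv'_cont.measurable)) E
      hE_meas 0 (Cg * (2 * A')) le_rfl ?_ ?_
    · intro x
      rw [Pi.mul_apply, Pi.sub_apply, abs_mul]
      have : |u x - v' x| ≤ 2 * A' := by
        calc |u x - v' x| ≤ |u x| + |v' x| := abs_sub _ _
          _ ≤ 2 * A' := by have := hu_bdd' x; have := hv'_bdd x; linarith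
      exact mul_le_mul (hCg x) this (abs_nonneg _) hCg0'
    · intro x hx
      rw [Pi.mul_apply, Pi.sub_apply, hv'_eq x hx]
      simp
  -- bound T4
  have hb4 : |T4| ≤ 0 * (μ Set.univ).toReal + Cg * (2 * A') * (μ E).toReal := by
    refine aux_abs_integral_le μ _ ((hg.measurable).mul (hv'_cont.measurable.sub hu_meas)) E
      hE_meas 0 (Cg * (2 * A')) le_rfl ?_ ?_
    · intro x
      rw [Pi.mul_apply, Pi.sub_apply, abs_mul]
      have : |v' x - u x| ≤ 2 * A' := by
        calc |v' x - u x| ≤ |v' x| + |u x| := abs_sub _ _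
          _ ≤ 2 * A' := by have := hu_bdd' x; have := hv'_bdd x; linarith
      exact mul_le_mul (hCg x) this (abs_nonneg _) hCg0'
    · intro x hx
      rw [Pi.mul_apply, Pi.sub_apply, hv'_eq x hx]
      simp
  -- combine
  rw [Real.dist_eq] at h3 ⊢
  rw [key]
  have habs : |T1 + T2 + T3 + T4| ≤ |T1| + |T2| + |T3| + |T4| := by
    calc |T1 + T2 + T3 + T4| ≤ |T1 + T2 + T3| + |T4| := abs_add_le _ _
      _ ≤ |T1 + T2| + |T3| + |T4| := by have := abs_add_le (T1 + T2) T3; linarith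
      _ ≤ |T1| + |T2| + |T3| + |T4| := by have := abs_add_le T1 T2; linarith
  have hmassnn : 0 ≤ ((μs j) Set.univ).toReal := ENNReal.toReal_nonneg
  have hEnn : 0 ≤ ((μs j) E).toReal := ENNReal.toReal_nonneg
  have hFnn : 0 ≤ ((μs j) (F j)).toReal := ENNReal.toReal_nonneg
  have hμEnn : 0 ≤ (μ E).toReal := ENNReal.toReal_nonneg
  -- final numeric bound
  have hKrA : Cg * (2 * A') * r ≤ K * r := mul_le_mul_of_nonneg_right hCgA hr.le
  have hT1fin : |T1| ≤ K * r + K * r := by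
    have h1 : Cg * r * ((μs j) Set.univ).toReal ≤ Cg * r * M :=
      mul_le_mul_of_nonneg_left hM2.le (by positivity)
    have h2 : Cg * (2 * A') * ((μs j) (F j)).toReal ≤ Cg * (2 * A') * r :=
      mul_le_mul_of_nonneg_left hμjF (by positivity)
    have h3a : Cg * r * M ≤ K * r := by
      calc Cg * r * M = Cg * M * r := by ring
        _ ≤ K * r := mul_le_mul_of_nonneg_right hCgM hr.le
    linarith
  have hT2fin : |T2| ≤ K * r := by
    have h2 : Cg * (2 * A') * ((μs j) E).toReal ≤ Cg * (2 * A') * r :=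
      mul_le_mul_of_nonneg_left hμjE' (by positivity)
    linarith
  have hT4fin : |T4| ≤ K * r := by
    have h2 : Cg * (2 * A') * (μ E).toReal ≤ Cg * (2 * A') * r :=
      mul_le_mul_of_nonneg_left hμE' (by positivity)
    linarith
  have h3' : |T3| < ε / 5 := h3
  linarith
end

section
/- Let X be a compact metric space, let (μ_j)_{j∈ℕ} and μ be finite Borel measures on X with μ_j → μ weakly, and let ν be a [0,∞]-valued function on the Borel subsets of X satisfying the uniform absolute continuity condition: for every ε > 0 there exists δ > 0 such that every Borel set E with ν(E) < δ satisfies μ(E) < ε and μ_j(E) < ε for all j. If a Borel set E ⊆ X is ν-quasi-open, i.e. for every ε > 0 there exists an open set U ⊆ X with ν((U∖E) ∪ (E∖U)) < ε, then liminf_{j→∞} μ_j(E) ≥ μ(E). If a Borel set V ⊆ X is ν-quasi-closed, i.e. for every ε > 0 there exists a closed set W ⊆ X with ν((W∖V) ∪ (V∖W)) < ε, then limsup_{j→∞} μ_j(V) ≤ μ(V). -/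
open MeasureTheory Filter
open scoped ENNReal

lemma liminf_add_const_ennreal (f : ℕ → ℝ≥0∞) (c : ℝ≥0∞) :
    atTop.liminf (fun j => f j + c) = atTop.liminf f + c := by
  have hmono : Monotone (fun x : ℝ≥0∞ => x + c) := fun _ _ h => add_le_add_left h c
  exact (hmono.map_liminf_of_continuousAt f (continuous_add_right c).continuousAt).symm

lemma limsup_add_const_ennreal (f : ℕ → ℝ≥0∞) (c : ℝ≥0∞) :
    atTop.limsup (fun j => f j + c) = atTop.limsup f + c := by
  have hmono : Monotone (fun x : ℝ≥0∞ => x + c) := fun _ _ h => add_le_add_left h c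
  exact (hmono.map_limsup_of_continuousAt f (continuous_add_right c).continuousAt).symm

/-- Portmanteau-type inequalities for quasi-open and quasi-closed sets: if `μ_j → μ` weakly
and all the measures are uniformly absolutely continuous with respect to a set function `ν`,
then `liminf μ_j(E) ≥ μ(E)` for `ν`-quasi-open `E` and `limsup μ_j(V) ≤ μ(V)` for
`ν`-quasi-closed `V`. -/
theorem portmanteau_quasi_open_closed {X : Type*} [MetricSpace X] [CompactSpace X]
    [MeasurableSpace X] [BorelSpace X]
    (μs : ℕ → Measure X) (μ : Measure X)
    (hfinj : ∀ j, IsFiniteMeasure (μs j)) (hfin : IsFiniteMeasure μ)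
    (hweak : ∀ g : X → ℝ, Continuous g →
      Tendsto (fun j => ∫ x, g x ∂(μs j)) atTop (nhds (∫ x, g x ∂μ)))
    (ν : Set X → ℝ≥0∞)
    (huac : ∀ ε : ℝ≥0∞, 0 < ε → ∃ δ : ℝ≥0∞, 0 < δ ∧ ∀ E : Set X, MeasurableSet E →
      ν E < δ → μ E < ε ∧ ∀ j, μs j E < ε) :
    (∀ E : Set X, MeasurableSet E →
      (∀ ε : ℝ≥0∞, 0 < ε → ∃ U : Set X, IsOpen U ∧ ν ((U \ E) ∪ (E \ U)) < ε) →
      μ E ≤ liminf (fun j => μs j E) atTop) ∧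
    (∀ V : Set X, MeasurableSet V →
      (∀ ε : ℝ≥0∞, 0 < ε → ∃ W : Set X, IsClosed W ∧ ν ((W \ V) ∪ (V \ W)) < ε) →
      limsup (fun j => μs j V) atTop ≤ μ V) := by
  -- package as finite measures
  haveI := hfin
  set P : ℕ → FiniteMeasure X := fun j => ⟨μs j, hfinj j⟩ with hP
  set Q : FiniteMeasure X := ⟨μ, hfin⟩ with hQ
  have hPQ : Tendsto P atTop (nhds Q) := by
    apply FiniteMeasure.tendsto_iff_forall_integral_tendsto.mpr
    intro f
    exact hweak f f.continuous
  -- closed set portmanteau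
  have key_closed : ∀ F : Set X, IsClosed F →
      atTop.limsup (fun j => μs j F) ≤ μ F := by
    intro F hF
    exact FiniteMeasure.limsup_measure_closed_le_of_tendsto hPQ hF
  -- total masses converge
  have mass_tendsto : Tendsto (fun j => μs j Set.univ) atTop (nhds (μ Set.univ)) := by
    have h1 := hweak (fun _ => (1 : ℝ)) continuous_const
    simp only [integral_const, smul_eq_mul, mul_one] at h1
    exact (ENNReal.tendsto_toReal_iff (fun j => measure_ne_top (μs j) _)
      (measure_ne_top μ _)).mp h1
  -- open set portmanteau
  have key_open : ∀ U : Set X, IsOpen U →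
      μ U ≤ atTop.liminf (fun j => μs j U) := by
    intro U hU
    rcases eq_or_ne (μ Set.univ) 0 with h0 | h0
    · exact le_trans (le_trans (measure_mono (Set.subset_univ U)) h0.le) zero_le
    apply ENNReal.le_of_forall_pos_le_add
    intro ε hε _
    have hε2 : (0 : ℝ≥0∞) < (ε : ℝ≥0∞) / 2 :=
      ENNReal.half_pos (by exact_mod_cast hε.ne')
    -- eventually μs j Uᶜ < μ Uᶜ + ε/2
    have hlt : atTop.limsup (fun j => μs j Uᶜ) < μ Uᶜ + ε / 2 :=
      lt_of_le_of_lt (key_closed Uᶜ hU.isClosed_compl)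
        (ENNReal.lt_add_right (measure_ne_top μ _) hε2.ne')
    have h1 : ∀ᶠ j in atTop, μs j Uᶜ < μ Uᶜ + ε / 2 := eventually_lt_of_limsup_lt hlt
    -- eventually μs j univ > μ univ - ε/2
    have h2 : ∀ᶠ j in atTop, μ Set.univ - ε / 2 < μs j Set.univ :=
      mass_tendsto.eventually_const_lt
        (ENNReal.sub_lt_self (measure_ne_top μ _) h0 hε2.ne')
    have h3 : ∀ᶠ j in atTop, μ U - (ε / 2 + ε / 2) ≤ μs j U := by
      filter_upwards [h1, h2] with j hj1 hj2
      have hsub : μs j Set.univ - μs j Uᶜ ≤ μs j U := by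
        rw [tsub_le_iff_right]
        calc μs j Set.univ = μs j (U ∪ Uᶜ) := by rw [Set.union_compl_self]
          _ ≤ μs j U + μs j Uᶜ := measure_union_le _ _
      have hU' : μ U ≤ μ Set.univ - μ Uᶜ := by
        have h := measure_compl (hU.measurableSet.compl) (measure_ne_top μ Uᶜ)
        rw [compl_compl] at h
        exact h.le
      calc μ U - (ε / 2 + ε / 2)
          ≤ (μ Set.univ - μ Uᶜ) - (ε / 2 + ε / 2) := tsub_le_tsub_right hU' _
        _ = (μ Set.univ - ε / 2) - (μ Uᶜ + ε / 2) := by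
            rw [tsub_tsub, tsub_tsub]; ring_nf
        _ ≤ μs j Set.univ - μs j Uᶜ := tsub_le_tsub hj2.le hj1.le
        _ ≤ μs j U := hsub
    have h4 : μ U - (ε / 2 + ε / 2) ≤ atTop.liminf (fun j => μs j U) :=
      le_liminf_of_le (by isBoundedDefault) h3
    rw [ENNReal.add_halves] at h4
    rwa [tsub_le_iff_right] at h4
  constructor
  · -- quasi-open case
    intro E hE hquasi
    apply ENNReal.le_of_forall_pos_le_add
    intro ε hε _
    have hε2 : (0 : ℝ≥0∞) < (ε : ℝ≥0∞) / 2 :=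
      ENNReal.half_pos (by exact_mod_cast hε.ne')
    obtain ⟨δ, hδ, hδ'⟩ := huac ((ε : ℝ≥0∞) / 2) hε2
    obtain ⟨U, hUopen, hUν⟩ := hquasi δ hδ
    have hmeas : MeasurableSet ((U \ E) ∪ (E \ U)) :=
      ((hUopen.measurableSet.diff hE).union (hE.diff hUopen.measurableSet))
    obtain ⟨hμsym, hμssym⟩ := hδ' _ hmeas hUν
    -- μ E ≤ μ U + ε/2
    have step1 : μ E ≤ μ U + (ε : ℝ≥0∞) / 2 := by
      calc μ E ≤ μ (U ∪ (E \ U)) := measure_mono (fun x hx => by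
            by_cases h : x ∈ U
            · exact Or.inl h
            · exact Or.inr ⟨hx, h⟩)
        _ ≤ μ U + μ (E \ U) := measure_union_le _ _
        _ ≤ μ U + μ ((U \ E) ∪ (E \ U)) :=
            add_le_add_right (measure_mono Set.subset_union_right) _
        _ ≤ μ U + (ε : ℝ≥0∞) / 2 := add_le_add_right hμsym.le _
    -- μs j U ≤ μs j E + ε/2
    have step2 : ∀ j, μs j U ≤ μs j E + (ε : ℝ≥0∞) / 2 := by
      intro j
      calc μs j U ≤ μs j (E ∪ (U \ E)) := measure_mono (fun x hx => by
            by_cases h : x ∈ E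
            · exact Or.inl h
            · exact Or.inr ⟨hx, h⟩)
        _ ≤ μs j E + μs j (U \ E) := measure_union_le _ _
        _ ≤ μs j E + μs j ((U \ E) ∪ (E \ U)) :=
            add_le_add_right (measure_mono Set.subset_union_left) _
        _ ≤ μs j E + (ε : ℝ≥0∞) / 2 := add_le_add_right (hμssym j).le _
    calc μ E ≤ μ U + (ε : ℝ≥0∞) / 2 := step1
      _ ≤ atTop.liminf (fun j => μs j U) + (ε : ℝ≥0∞) / 2 :=
          add_le_add_left (key_open U hUopen) _
      _ ≤ atTop.liminf (fun j => μs j E + (ε : ℝ≥0∞) / 2) + (ε : ℝ≥0∞) / 2 :=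
          add_le_add_left (liminf_le_liminf (Eventually.of_forall step2)) _
      _ = atTop.liminf (fun j => μs j E) + (ε : ℝ≥0∞) / 2 + (ε : ℝ≥0∞) / 2 := by
          rw [liminf_add_const_ennreal]
      _ = atTop.liminf (fun j => μs j E) + ε := by
          rw [add_assoc, ENNReal.add_halves]
  · -- quasi-closed case
    intro V hV hquasi
    apply ENNReal.le_of_forall_pos_le_add
    intro ε hε _
    have hε2 : (0 : ℝ≥0∞) < (ε : ℝ≥0∞) / 2 :=
      ENNReal.half_pos (by exact_mod_cast hε.ne')
    obtain ⟨δ, hδ, hδ'⟩ := huac ((ε : ℝ≥0∞) / 2) hε2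
    obtain ⟨W, hWclosed, hWν⟩ := hquasi δ hδ
    have hmeas : MeasurableSet ((W \ V) ∪ (V \ W)) :=
      ((hWclosed.measurableSet.diff hV).union (hV.diff hWclosed.measurableSet))
    obtain ⟨hμsym, hμssym⟩ := hδ' _ hmeas hWν
    have step1 : ∀ j, μs j V ≤ μs j W + (ε : ℝ≥0∞) / 2 := by
      intro j
      calc μs j V ≤ μs j (W ∪ (V \ W)) := measure_mono (fun x hx => by
            by_cases h : x ∈ W
            · exact Or.inl h
            · exact Or.inr ⟨hx, h⟩)
        _ ≤ μs j W + μs j (V \ W) := measure_union_le _ _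
        _ ≤ μs j W + μs j ((W \ V) ∪ (V \ W)) :=
            add_le_add_right (measure_mono Set.subset_union_right) _
        _ ≤ μs j W + (ε : ℝ≥0∞) / 2 := add_le_add_right (hμssym j).le _
    have step2 : μ W ≤ μ V + (ε : ℝ≥0∞) / 2 := by
      calc μ W ≤ μ (V ∪ (W \ V)) := measure_mono (fun x hx => by
            by_cases h : x ∈ V
            · exact Or.inl h
            · exact Or.inr ⟨hx, h⟩)
        _ ≤ μ V + μ (W \ V) := measure_union_le _ _
        _ ≤ μ V + μ ((W \ V) ∪ (V \ W)) :=
            add_le_add_right (measure_mono Set.subset_union_left) _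
        _ ≤ μ V + (ε : ℝ≥0∞) / 2 := add_le_add_right hμsym.le _
    calc atTop.limsup (fun j => μs j V)
        ≤ atTop.limsup (fun j => μs j W + (ε : ℝ≥0∞) / 2) :=
          limsup_le_limsup (Eventually.of_forall step1)
      _ = atTop.limsup (fun j => μs j W) + (ε : ℝ≥0∞) / 2 :=
          limsup_add_const_ennreal _ _
      _ ≤ μ W + (ε : ℝ≥0∞) / 2 := add_le_add_left (key_closed W hWclosed) _
      _ ≤ μ V + (ε : ℝ≥0∞) / 2 + (ε : ℝ≥0∞) / 2 := add_le_add_left step2 _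
      _ = μ V + ε := by rw [add_assoc, ENNReal.add_halves]
end

section
/- Let X be a compact metric space and let ν be a [0,∞]-valued function on subsets of X that is monotone (E ⊆ F implies ν(E) ≤ ν(F)) and countably subadditive (ν(∪_k E_k) ≤ ∑_k ν(E_k)). Let f : X → ℝ be a function with c₀ ≤ f ≤ c₁ for constants c₀ ≤ c₁, and assume f is ν-quasi-continuous: for every ε > 0 there exists an open set U ⊆ X with ν(U) < ε such that the restriction of f to X∖U is continuous. Then there exists a nonincreasing sequence (g_j)_{j∈ℕ} of lower semicontinuous functions on X with c₀ ≤ g_j ≤ c₁ for all j, converging pointwise to a function g such that ν({x ∈ X : g(x) ≠ f(x)}) = 0. -/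
open Filter
open scoped ENNReal

/-- A bounded `ν`-quasi-continuous function `f` on a compact metric space is the pointwise
limit, off a set of `ν` zero, of a nonincreasing sequence of lower semicontinuous functions
with the same bounds, provided `ν` is monotone and countably subadditive. -/
theorem quasi_continuous_approx_lsc {X : Type*} [MetricSpace X] [CompactSpace X]
    (ν : Set X → ℝ≥0∞)
    (hmono : ∀ E F : Set X, E ⊆ F → ν E ≤ ν F)
    (hsub : ∀ E : ℕ → Set X, ν (⋃ k, E k) ≤ ∑' k, ν (E k))
    (f : X → ℝ) (c₀ c₁ : ℝ) (hc : c₀ ≤ c₁)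
    (hbdd : ∀ x, c₀ ≤ f x ∧ f x ≤ c₁)
    (hqc : ∀ ε : ℝ≥0∞, 0 < ε → ∃ U : Set X, IsOpen U ∧ ν U < ε ∧ ContinuousOn f Uᶜ) :
    ∃ g : ℕ → X → ℝ, (∀ j, LowerSemicontinuous (g j)) ∧
      (∀ j x, c₀ ≤ g j x ∧ g j x ≤ c₁) ∧
      (∀ x, Antitone fun j => g j x) ∧
      ∃ glim : X → ℝ,
        (∀ x, Tendsto (fun j => g j x) atTop (nhds (glim x))) ∧
        ν {x | glim x ≠ f x} = 0 := by
  -- Choose open sets U j with ν (U j) < 2⁻¹ ^ (j+1)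
  have hU : ∀ j : ℕ, ∃ U : Set X, IsOpen U ∧ ν U < 2⁻¹ ^ (j + 1) ∧ ContinuousOn f Uᶜ := by
    intro j
    exact hqc _ (ENNReal.pow_pos (by norm_num) _)
  choose U hUopen hUν hUcont using hU
  -- Tietze extensions
  have hext : ∀ j : ℕ, ∃ h : X → ℝ, Continuous h ∧ (∀ x, c₀ ≤ h x ∧ h x ≤ c₁) ∧
      ∀ x ∈ (U j)ᶜ, h x = f x := by
    intro j
    have hclosed : IsClosed (U j)ᶜ := (hUopen j).isClosed_compl
    obtain ⟨g, hg⟩ := ContinuousMap.exists_restrict_eq (Y := ℝ) hclosed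
      ⟨(U j)ᶜ.restrict f, (hUcont j).restrict⟩
    refine ⟨fun x => max c₀ (min c₁ (g x)), by fun_prop, fun x => ⟨le_max_left _ _, ?_⟩, ?_⟩
    · exact max_le hc (min_le_left _ _)
    · intro x hx
      have : g x = f x := congrFun (congrArg DFunLike.coe hg) ⟨x, hx⟩
      dsimp only
      rw [this, min_eq_right (hbdd x).2, max_eq_right (hbdd x).1]
  choose h hcont hhb hheq using hext
  -- g j x = sup over k of h (j+k) x
  set g : ℕ → X → ℝ := fun j x => ⨆ k, h (j + k) x with hg
  have hbdda : ∀ j x, BddAbove (Set.range fun k => h (j + k) x) :=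
    fun j x => ⟨c₁, by rintro _ ⟨k, rfl⟩; exact (hhb _ x).2⟩
  have hgle : ∀ j x, g j x ≤ c₁ := fun j x =>
    ciSup_le fun k => (hhb _ x).2
  have hgge : ∀ j x, c₀ ≤ g j x := fun j x =>
    le_trans (hhb (j + 0) x).1 (le_ciSup (hbdda j x) 0)
  have hanti : ∀ x, Antitone fun j => g j x := by
    intro x j j' hjj'
    refine ciSup_le fun k => ?_
    have : j' + k = j + (j' + k - j) := by omega
    rw [this]
    exact le_ciSup (hbdda j x) _
  refine ⟨g, ?_, fun j x => ⟨hgge j x, hgle j x⟩, hanti, ?_⟩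
  · -- lower semicontinuity
    intro j x y hy
    obtain ⟨k, hk⟩ := exists_lt_of_lt_ciSup hy
    have : ∀ᶠ x' in nhds x, y < h (j + k) x' :=
      ((hcont (j + k)).continuousAt (x := x)).eventually_const_lt hk
    exact this.mono fun x' hx' => lt_of_lt_of_le hx' (le_ciSup (hbdda j x') k)
  · -- limit
    set glim : X → ℝ := fun x => ⨅ j, g j x with hglim
    have hbb : ∀ x, BddBelow (Set.range fun j => g j x) :=
      fun x => ⟨c₀, by rintro _ ⟨j, rfl⟩; exact hgge j x⟩
    refine ⟨glim, fun x => tendsto_atTop_ciInf (hanti x) (hbb x), ?_⟩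
    -- bad set
    have key : ∀ j : ℕ, {x | glim x ≠ f x} ⊆ ⋃ k, U (j + k) := by
      intro j x hx
      by_contra hxU
      simp only [Set.mem_iUnion, not_exists] at hxU
      apply hx
      have heq : ∀ j', j ≤ j' → g j' x = f x := by
        intro j' hj'
        have hall : ∀ k, h (j' + k) x = f x := by
          intro k
          have hmem := hxU (j' + k - j)
          rw [show j + (j' + k - j) = j' + k by omega] at hmem
          exact hheq _ x hmem
        calc g j' x = ⨆ k, h (j' + k) x := rfl
          _ = ⨆ _ : ℕ, f x := by congr 1; ext k; exact hall k
          _ = f x := ciSup_const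
      have : glim x = f x := by
        refine le_antisymm (le_trans (ciInf_le (hbb x) j) (heq j le_rfl).le) ?_
        exact le_ciInf fun j' => by
          rcases le_total j j' with hle | hle
          · exact (heq j' hle).ge
          · exact le_trans (heq j le_rfl).ge (hanti x hle)
      exact this
    have hbound : ∀ j : ℕ, ν {x | glim x ≠ f x} ≤ 2⁻¹ ^ j := by
      intro j
      calc ν {x | glim x ≠ f x} ≤ ν (⋃ k, U (j + k)) := hmono _ _ (key j)
        _ ≤ ∑' k, ν (U (j + k)) := hsub _
        _ ≤ ∑' k : ℕ, (2⁻¹ : ℝ≥0∞) ^ (j + k + 1) := ENNReal.tsum_le_tsum fun k => (hUν _).le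
        _ = 2⁻¹ ^ j * ∑' k : ℕ, (2⁻¹ : ℝ≥0∞) ^ (k + 1) := by
            rw [← ENNReal.tsum_mul_left]; congr 1; ext k; rw [← pow_add]; ring_nf
        _ ≤ 2⁻¹ ^ j * 1 := by
            gcongr
            have : ∑' k : ℕ, (2⁻¹ : ℝ≥0∞) ^ (k + 1) = 1 := by
              calc ∑' k : ℕ, (2⁻¹ : ℝ≥0∞) ^ (k + 1)
                  = 2⁻¹ * ∑' k : ℕ, (2⁻¹ : ℝ≥0∞) ^ k := by
                    rw [← ENNReal.tsum_mul_left]; congr 1; ext k; rw [pow_succ]; ring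
                _ = 2⁻¹ * (1 - 2⁻¹)⁻¹ := by rw [ENNReal.tsum_geometric]
                _ = 1 := by
                    rw [ENNReal.one_sub_inv_two, inv_inv,
                      ENNReal.inv_mul_cancel two_ne_zero ENNReal.ofNat_ne_top]
            exact this.le
        _ = 2⁻¹ ^ j := mul_one _
    refine le_antisymm ?_ zero_le
    refine ge_of_tendsto' (ENNReal.tendsto_pow_atTop_nhds_zero_of_lt_one ?_) hbound
    simp [ENNReal.inv_lt_one]
end
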